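/- Under the hypotheses of the previous mass estimate (2τλ < 1, −λμ(Ω) ≥ −λρ(Ω) + T_c(μ,ρ)/(2τ), and T_c(μ,ρ) ≥ (√μ(Ω) − √ρ(Ω))²), the dissipation bound T_c(μ, ρ) ≤ 2τλ(ρ(Ω) − μ(Ω)) ≤ (4λτ)²/(1−2λτ)² · μ(Ω) holds. -/
import Mathlib


open MeasureTheory Set

set_option maxHeartbeats 1000000 in
lemma dissipation_aux (lam τ T A B : ℝ) (hlam : 0 < lam) (hτ : 0 < τ)
    (hstep : 2 * τ * lam < 1) (hA : 0 ≤ A) (hB : 0 ≤ B)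
    (hT : T ≥ (Real.sqrt A - Real.sqrt B) ^ 2)
    (hopt : -lam * A ≥ -lam * B + T / (2 * τ)) :
    T ≤ 2 * τ * lam * (B - A) ∧
    2 * τ * lam * (B - A) ≤ (4 * lam * τ) ^ 2 / (1 - 2 * lam * τ) ^ 2 * A := by
  set a := Real.sqrt A with ha
  set b := Real.sqrt B with hb
  have ha0 : 0 ≤ a := Real.sqrt_nonneg _
  have hb0 : 0 ≤ b := Real.sqrt_nonneg _
  have ha2 : a ^ 2 = A := Real.sq_sqrt hA
  have hb2 : b ^ 2 = B := Real.sq_sqrt hB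
  clear_value a b
  have hτ' : 0 < 2 * τ := by linarith
  have h1 : T ≤ 2 * τ * lam * (B - A) := by
    have := (div_le_iff₀ hτ').mp (by linarith : T / (2 * τ) ≤ lam * (B - A))
    linarith [this]
  refine ⟨h1, ?_⟩
  rw [← ha2, ← hb2]
  have hs : 0 < 1 - 2 * lam * τ := by nlinarith
  rw [div_mul_eq_mul_div, le_div_iff₀ (by positivity)]
  rcases le_or_gt b a with hba | hab
  · nlinarith [mul_nonneg (mul_nonneg (mul_nonneg hτ'.le hlam.le)
        (by nlinarith : (0:ℝ) ≤ a ^ 2 - b ^ 2)) (sq_nonneg (1 - 2 * lam * τ)),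
      sq_nonneg (4 * lam * τ * a)]
  · have h2 : (b - a) ^ 2 ≤ 2 * τ * lam * ((b - a) * (b + a)) := by
      nlinarith [hT, h1, ha2, hb2]
    have hba' : 0 < b - a := by linarith
    have key : b - a ≤ 2 * τ * lam * (b + a) := by nlinarith [h2]
    have hba2 : b ^ 2 - a ^ 2 ≤ 2 * τ * lam * (b + a) ^ 2 := by
      nlinarith [key, ha0, hb0]
    have h30 : 0 ≤ (b + a) * (1 - 2 * lam * τ) := by positivity
    have h3 : (b + a) * (1 - 2 * lam * τ) ≤ 2 * a := by nlinarith [key]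
    have h3' : ((b + a) * (1 - 2 * lam * τ)) ^ 2 ≤ (2 * a) ^ 2 :=
      pow_le_pow_left₀ h30 h3 2
    calc 2 * τ * lam * (b ^ 2 - a ^ 2) * (1 - 2 * lam * τ) ^ 2
        ≤ 2 * τ * lam * (2 * τ * lam * (b + a) ^ 2) * (1 - 2 * lam * τ) ^ 2 := by
          have hc : (0:ℝ) ≤ 2 * τ * lam * (1 - 2 * lam * τ) ^ 2 := by positivity
          have := mul_le_mul_of_nonneg_right hba2 hc
          nlinarith [this]
      _ = (2 * τ * lam) ^ 2 * ((b + a) * (1 - 2 * lam * τ)) ^ 2 := by ring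
      _ ≤ (2 * τ * lam) ^ 2 * (2 * a) ^ 2 := by
          nlinarith [sq_nonneg (2 * τ * lam), h3']
      _ = (4 * lam * τ) ^ 2 * a ^ 2 := by ring

theorem dissipation_estimate_one_step {Ω : Type*} [MeasurableSpace Ω]
    (μ ρ : Measure Ω) [IsFiniteMeasure μ] [IsFiniteMeasure ρ]
    (lam τ T : ℝ) (hlam : 0 < lam) (hτ : 0 < τ) (hstep : 2 * τ * lam < 1)
    (hT : T ≥ (Real.sqrt (μ univ).toReal - Real.sqrt (ρ univ).toReal) ^ 2)
    (hopt : -lam * (μ univ).toReal ≥ -lam * (ρ univ).toReal + T / (2 * τ)) :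
    T ≤ 2 * τ * lam * ((ρ univ).toReal - (μ univ).toReal) ∧
    2 * τ * lam * ((ρ univ).toReal - (μ univ).toReal) ≤
      (4 * lam * τ) ^ 2 / (1 - 2 * lam * τ) ^ 2 * (μ univ).toReal :=
  dissipation_aux lam τ T _ _ hlam hτ hstep ENNReal.toReal_nonneg
    ENNReal.toReal_nonneg hT hopt
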